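/- arXiv:2503.14794 — 2 statements merged into one kernel-verified Lean document; each statement's English description precedes it below -/
import Mathlib

section
/- Let ε ∈ (−1/2, 1/2) and let v, v′ ∈ (ε+ℤ)ⁿ₊. If v is ε-triangular and |v′| < |v|, then it is not the case that p_ε(v′) ≤ p_ε(v) in the dominance order. -/
open Finset

/-- A partition of `N`: an antitone function `ℕ → ℕ` (the 0-indexed parts, padded with
zeros) supported on `{0, …, N-1}` whose parts sum to `N`. -/
def IsPartition (N : ℕ) (p : ℕ → ℕ) : Prop :=
  Antitone p ∧ (∀ i, N ≤ i → p i = 0) ∧ ∑ i ∈ Finset.range N, p i = N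

/-- Dominance order: `Dominates p q` means `q ≤ p`, i.e. every partial sum of the parts
of `q` is at most the corresponding partial sum of the parts of `p`. -/
def Dominates (p q : ℕ → ℕ) : Prop :=
  ∀ j, ∑ i ∈ Finset.range j, q i ≤ ∑ i ∈ Finset.range j, p i

/-- Multiplicity of the value `k` among the first `N` parts of `p`. -/
def mult (N : ℕ) (p : ℕ → ℕ) (k : ℕ) : ℕ :=
  ((Finset.range N).filter (fun i => p i = k)).card

/-- Multiplicity of the real value `s` among the entries of the tuple `v`. -/
noncomputable def multR {n : ℕ} (v : Fin n → ℝ) (s : ℝ) : ℕ :=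
  {i : Fin n | v i = s}.ncard

/-- Euclidean norm of a real tuple. -/
noncomputable def enormR {n : ℕ} (v : Fin n → ℝ) : ℝ :=
  Real.sqrt (∑ i, (v i) ^ 2)

/-- `IsVEps n ε p w` says that the weakly decreasing tuple `w : Fin n → ℝ` is `v_ε(p)`:
its entries lie in `ε + ℤ`, `ε` occurs with multiplicity `p 0 = μ₀`, and for `k ≥ 1`
(writing the parts of `p` as `[μ₀, μ₁, μ₁', μ₂, μ₂', …]`, so `μ_k = p (2k-1)` and
`μ_k' = p (2k)`), if `ε ≥ 0` then `ε - k` occurs `μ_k` times and `ε + k` occurs `μ_k'`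
times, while if `ε < 0` then `ε + k` occurs `μ_k` times and `ε - k` occurs `μ_k'` times. -/
def IsVEps (n : ℕ) (ε : ℝ) (p : ℕ → ℕ) (w : Fin n → ℝ) : Prop :=
  Antitone w ∧ (∀ i, ∃ k : ℤ, w i = ε + (k : ℝ)) ∧
  multR w ε = p 0 ∧
  ∀ k : ℕ, 1 ≤ k →
    ((0 ≤ ε → multR w (ε - (k : ℝ)) = p (2 * k - 1) ∧ multR w (ε + (k : ℝ)) = p (2 * k)) ∧
     (ε < 0 → multR w (ε + (k : ℝ)) = p (2 * k - 1) ∧ multR w (ε - (k : ℝ)) = p (2 * k)))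

/-- `IsPEps n ε v q` says that the partition `q` of `n` is `p_ε(v)`: the weakly decreasing
rearrangement of the multiplicity sequence `[m_v(ε), m_v(ε-1), m_v(ε+1), …]`, i.e. for each
positive value `c`, the number of parts of `q` equal to `c` is the number of `k : ℤ` with
`m_v(ε + k) = c`. -/
def IsPEps (n : ℕ) (ε : ℝ) (v : Fin n → ℝ) (q : ℕ → ℕ) : Prop :=
  IsPartition n q ∧
  ∀ c : ℕ, 1 ≤ c → mult n q c = {k : ℤ | multR v (ε + (k : ℝ)) = c}.ncard

/-!
List `ε + ℤ` as `x₀, x₁, …` in the order `ε, ε ∓ 1, ε ± 1, ε ∓ 2, …` used to define `v_ε`;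
since `|ε| ≤ 1/2` the weights `x_j²` are nondecreasing. If `v = v_ε(p)`, then `m_v(x_j) = p_j`,
so `p_ε(v) = p` and `|v|² = ∑ p_j x_j²`. For any `v'`, the sequence `m_{v'}(x_j)` is a
rearrangement of `p_ε(v')`, so its partial sums are bounded by those of `p_ε(v')`, hence by those
of `p` when `p_ε(v') ≤ p_ε(v)`. Summation by parts against the nondecreasing weights `x_j²` then
gives `|v|² ≤ |v'|²`.
-/

theorem card_filter_lt_eq_of_card_filter_eq {ι κ : Type*} {s : Finset ι} {t : Finset κ}
    {f : ι → ℕ} {g : κ → ℕ} (h : ∀ c, 1 ≤ c → #{i ∈ s | f i = c} = #{i ∈ t | g i = c})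
    (c : ℕ) : #{i ∈ s | c < f i} = #{i ∈ t | c < g i} := by
  have hM : (s.val.map f).filter (c < ·) = (t.val.map g).filter (c < ·) := by
    ext d
    rw [Multiset.count_filter, Multiset.count_filter]
    split_ifs with hd
    · simpa [Multiset.count_map, eq_comm, card_def, filter_val] using h d (c.zero_le.trans_lt hd)
    · rfl
  simpa [Multiset.filter_map, card_def, filter_val] using congrArg Multiset.card hM

theorem sum_eq_sum_range_card_filter_lt {ι : Type*} (s : Finset ι) (f : ι → ℕ) {B : ℕ}
    (hB : ∀ i ∈ s, f i ≤ B) : ∑ i ∈ s, f i = ∑ c ∈ range B, #{i ∈ s | c < f i} := by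
  simp only [card_filter]
  rw [sum_comm]
  refine sum_congr rfl fun i hi => ?_
  have hlevels : {c ∈ range B | c < f i} = range (f i) := by
    ext c
    simp only [mem_filter, mem_range]
    have := hB i hi
    omega
  rw [← card_filter, hlevels, card_range]

theorem Antitone.lt_iff_lt_card_filter {r : ℕ → ℕ} (hr : Antitone r) {J : ℕ}
    (hrJ : ∀ j, J ≤ j → r j = 0) (c j : ℕ) : c < r j ↔ j < #{i ∈ range J | c < r i} := by
  constructor
  · intro hj
    have hsub : range (j + 1) ⊆ {i ∈ range J | c < r i} := fun i hi => by
      have hij : i ≤ j := Nat.lt_succ_iff.mp (mem_range.mp hi)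
      have hjJ : j < J := lt_of_not_ge fun hJj => by simp [hrJ j hJj] at hj
      exact mem_filter.mpr ⟨mem_range.mpr (hij.trans_lt hjJ), hj.trans_le (hr hij)⟩
    simpa using card_le_card hsub
  · intro hj
    by_contra hnj
    have hsub : {i ∈ range J | c < r i} ⊆ range j := fun i hi => by
      rw [mem_filter] at hi
      exact mem_range.mpr (lt_of_not_ge fun hji => hnj (hi.2.trans_le (hr hji)))
    exact hj.not_ge (by simpa using card_le_card hsub)

theorem eq_of_antitone_of_card_filter_lt_eq {p q : ℕ → ℕ} (hp : Antitone p) (hq : Antitone q)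
    {J : ℕ} (hpJ : ∀ j, J ≤ j → p j = 0) (hqJ : ∀ j, J ≤ j → q j = 0)
    (h : ∀ c, #{j ∈ range J | c < p j} = #{j ∈ range J | c < q j}) : p = q :=
  funext fun j => eq_of_forall_lt_iff fun c => by
    rw [hp.lt_iff_lt_card_filter hpJ, hq.lt_iff_lt_card_filter hqJ, h]

theorem sum_range_le_sum_range_of_card_filter_lt_eq {g r : ℕ → ℕ} (hr : Antitone r) {J : ℕ}
    (hrJ : ∀ j, J ≤ j → r j = 0)
    (h : ∀ c, #{j ∈ range J | c < g j} = #{j ∈ range J | c < r j}) {m : ℕ} (hm : m ≤ J) :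
    ∑ j ∈ range m, g j ≤ ∑ j ∈ range m, r j := by
  set B := ∑ j ∈ range m, (g j + r j)
  have hB : ∀ j ∈ range m, g j + r j ≤ B := fun j hj =>
    single_le_sum (f := fun j => g j + r j) (fun _ _ => Nat.zero_le _) hj
  rw [sum_eq_sum_range_card_filter_lt _ g fun j hj => (Nat.le_add_right _ _).trans (hB j hj),
    sum_eq_sum_range_card_filter_lt _ r fun j hj => (Nat.le_add_left _ _).trans (hB j hj)]
  refine sum_le_sum fun c _ => ?_
  have hr_initial : {j ∈ range m | c < r j} = range (min m #{j ∈ range J | c < r j}) := by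
    ext j
    simp only [mem_filter, mem_range, lt_min_iff, hr.lt_iff_lt_card_filter hrJ c j]
  calc #{j ∈ range m | c < g j} ≤ min m #{j ∈ range J | c < g j} :=
        le_min ((card_filter_le _ _).trans (card_range m).le)
          (card_le_card (filter_subset_filter _ (range_subset_range.mpr hm)))
    _ = #{j ∈ range m | c < r j} := by rw [h, hr_initial, card_range]

theorem sum_range_mul_le_of_sum_range_le {a b C : ℕ → ℝ} (hC : Monotone C) {J : ℕ}
    (hab : ∀ m ≤ J, ∑ j ∈ range m, a j ≤ ∑ j ∈ range m, b j)
    (htot : ∑ j ∈ range J, a j = ∑ j ∈ range J, b j) :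
    ∑ j ∈ range J, b j * C j ≤ ∑ j ∈ range J, a j * C j := by
  have hpartial : ∀ m ≤ J, ∑ j ∈ range m, (a j - b j) ≤ 0 := fun m hm => by
    rw [sum_sub_distrib]; linarith [hab m hm]
  have hparts := sum_range_by_parts C (fun j => a j - b j) J
  simp only [smul_eq_mul] at hparts
  have hnonneg : 0 ≤ ∑ j ∈ range J, C j * (a j - b j) := by
    rw [hparts, sum_sub_distrib, htot, sub_self, mul_zero, zero_sub, neg_nonneg]
    refine sum_nonpos fun i hi => mul_nonpos_of_nonneg_of_nonpos
      (sub_nonneg.mpr (hC i.le_succ)) (hpartial _ ?_)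
    have := mem_range.mp hi
    omega
  have hsplit : ∑ j ∈ range J, C j * (a j - b j)
      = ∑ j ∈ range J, a j * C j - ∑ j ∈ range J, b j * C j := by
    rw [← sum_sub_distrib]; exact sum_congr rfl fun _ _ => by ring
  linarith

section Lattice

variable {n : ℕ}

theorem multR_eq_card (w : Fin n → ℝ) (s : ℝ) : multR w s = #{i | w i = s} := by
  rw [multR, ← Set.ncard_coe_finset]; simp

theorem sum_comp_eq_sum_range_multR {J : ℕ} {w : Fin n → ℝ} {x : ℕ → ℝ}
    (hx : Function.Injective x) (hw : ∀ i, ∃ j < J, w i = x j) (F : ℝ → ℝ) :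
    ∑ i, F (w i) = ∑ j ∈ range J, multR w (x j) * F (x j) := by
  classical
  have hmaps : ∀ i ∈ univ, w i ∈ (range J).image x := fun i _ => by
    obtain ⟨j, hj, hwj⟩ := hw i
    exact mem_image.mpr ⟨j, mem_range.mpr hj, hwj.symm⟩
  rw [← sum_fiberwise_of_maps_to hmaps, sum_image hx.injOn]
  refine sum_congr rfl fun j _ => ?_
  rw [sum_congr rfl fun i hi => congrArg F (mem_filter.mp hi).2, sum_const, nsmul_eq_mul,
    multR_eq_card]

theorem ncard_multR_eq_card_filter {J : ℕ} {ε : ℝ} {w : Fin n → ℝ} {z : ℕ → ℤ}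
    (hz : Function.Injective z) (hw : ∀ i, ∃ j < J, w i = ε + z j) {c : ℕ} (hc : 1 ≤ c) :
    {k : ℤ | multR w (ε + k) = c}.ncard = #{j ∈ range J | multR w (ε + z j) = c} := by
  suffices h : {k : ℤ | multR w (ε + k) = c} = z '' ↑{j ∈ range J | multR w (ε + z j) = c} by
    rw [h, Set.ncard_image_of_injective _ hz, Set.ncard_coe_finset]
  ext k
  simp only [Set.mem_ofPred_eq, Set.mem_image, coe_filter, mem_range]
  constructor
  · intro hk
    obtain ⟨i, hi⟩ : {i | w i = ε + k}.Nonempty :=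
      Set.nonempty_of_ncard_ne_zero (by rw [← multR, hk]; omega)
    obtain ⟨j, hj, hwj⟩ := hw i
    have hzj : z j = k := by exact_mod_cast add_left_cancel (hwj.symm.trans hi)
    exact ⟨j, ⟨hj, hzj ▸ hk⟩, hzj⟩
  · rintro ⟨j, ⟨_, hj⟩, rfl⟩
    exact hj

theorem IsPEps.card_filter_eq {J : ℕ} {ε : ℝ} {w : Fin n → ℝ} {q : ℕ → ℕ}
    (hq : IsPEps n ε w q) (hnJ : n ≤ J) {z : ℕ → ℤ} (hz : Function.Injective z)
    (hw : ∀ i, ∃ j < J, w i = ε + z j) {c : ℕ} (hc : 1 ≤ c) :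
    #{j ∈ range J | q j = c} = #{j ∈ range J | multR w (ε + z j) = c} := by
  rw [← ncard_multR_eq_card_filter hz hw hc, ← hq.2 c hc, mult]
  congr 1
  ext j
  simp only [mem_filter, mem_range]
  have := hq.1.2.1 j
  constructor
  · rintro ⟨-, rfl⟩; exact ⟨by omega, rfl⟩
  · rintro ⟨hj, rfl⟩; exact ⟨by omega, rfl⟩

theorem IsPEps.sum_range_multR_le {J : ℕ} {ε : ℝ} {w : Fin n → ℝ} {q : ℕ → ℕ}
    (hq : IsPEps n ε w q) (hnJ : n ≤ J) {z : ℕ → ℤ} (hz : Function.Injective z)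
    (hw : ∀ i, ∃ j < J, w i = ε + z j) {m : ℕ} (hm : m ≤ J) :
    ∑ j ∈ range m, multR w (ε + z j) ≤ ∑ j ∈ range m, q j :=
  sum_range_le_sum_range_of_card_filter_lt_eq hq.1.1 (fun j hj => hq.1.2.1 j (hnJ.trans hj))
    (card_filter_lt_eq_of_card_filter_eq fun _ hc => (hq.card_filter_eq hnJ hz hw hc).symm) hm

end Lattice

theorem Equiv.intEquivNat_symm_two_mul (k : ℕ) : Equiv.intEquivNat.symm (2 * k) = k := by
  simp [Equiv.intEquivNat, Equiv.intEquivNatSumNat]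

theorem Equiv.intEquivNat_symm_two_mul_add_one (k : ℕ) :
    Equiv.intEquivNat.symm (2 * k + 1) = -(k + 1 : ℤ) := by
  simp [Equiv.intEquivNat, Equiv.intEquivNatSumNat, Int.negSucc_eq]

/-- `ε + zigzag ε j` runs through `ε + ℤ` in the order `ε, ε ∓ 1, ε ± 1, ε ∓ 2, …` (upper signs
for `ε ≥ 0`) in which the definition of `v_ε` lists multiplicities. -/
noncomputable def zigzag (ε : ℝ) : ℕ ≃ ℤ :=
  if 0 ≤ ε then Equiv.intEquivNat.symm else Equiv.intEquivNat.symm.trans (Equiv.neg ℤ)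

theorem monotone_sq_add_intEquivNat_symm {δ : ℝ} (hδ₀ : 0 ≤ δ) (hδ₁ : δ ≤ 1 / 2) :
    Monotone fun j => (δ + Equiv.intEquivNat.symm j) ^ 2 := by
  refine monotone_nat_of_le_succ fun j => ?_
  obtain ⟨k, rfl | rfl⟩ := Nat.even_or_odd' j
  · simp only [Equiv.intEquivNat_symm_two_mul, Equiv.intEquivNat_symm_two_mul_add_one]
    push_cast
    nlinarith [mul_nonneg (Nat.cast_nonneg (α := ℝ) k) (by linarith : (0 : ℝ) ≤ 1 - 2 * δ)]
  · rw [show 2 * k + 1 + 1 = 2 * (k + 1) by ring]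
    simp only [Equiv.intEquivNat_symm_two_mul, Equiv.intEquivNat_symm_two_mul_add_one]
    push_cast
    nlinarith [mul_nonneg hδ₀ (by positivity : (0 : ℝ) ≤ k + 1)]

theorem monotone_sq_add_zigzag {ε : ℝ} (hε : |ε| ≤ 1 / 2) :
    Monotone fun j => (ε + zigzag ε j) ^ 2 := by
  convert monotone_sq_add_intEquivNat_symm (abs_nonneg ε) hε using 2 with j
  unfold zigzag
  split_ifs with h
  · rw [abs_of_nonneg h]
  · rw [abs_of_neg (not_le.mp h)]
    simp only [Equiv.trans_apply, Equiv.neg_apply, Int.cast_neg]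
    ring

theorem IsVEps.multR_zigzag {n : ℕ} {ε : ℝ} {p : ℕ → ℕ} {w : Fin n → ℝ}
    (hV : IsVEps n ε p w) (j : ℕ) : multR w (ε + zigzag ε j) = p j := by
  obtain ⟨-, -, h₀, hk⟩ := hV
  obtain ⟨k, rfl | rfl⟩ := Nat.even_or_odd' j
  · rcases Nat.eq_zero_or_pos k with rfl | hk₀
    · by_cases hε : 0 ≤ ε <;>
        simpa [zigzag, hε, Equiv.intEquivNat, Equiv.intEquivNatSumNat] using h₀
    by_cases hε : 0 ≤ ε
    · simpa [zigzag, hε, Equiv.intEquivNat_symm_two_mul] using ((hk k hk₀).1 hε).2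
    · simpa [zigzag, hε, Equiv.intEquivNat_symm_two_mul, sub_eq_add_neg]
        using ((hk k hk₀).2 (not_le.mp hε)).2
  · have hodd : 2 * (k + 1) - 1 = 2 * k + 1 := by omega
    by_cases hε : 0 ≤ ε
    · simpa [zigzag, hε, Equiv.intEquivNat_symm_two_mul_add_one, hodd, sub_eq_add_neg]
        using ((hk (k + 1) k.succ_pos).1 hε).1
    · simpa [zigzag, hε, Equiv.intEquivNat_symm_two_mul_add_one, hodd]
        using ((hk (k + 1) k.succ_pos).2 (not_le.mp hε)).1

theorem eventually_forall_exists_lt_zigzag {n : ℕ} {ε : ℝ} {w : Fin n → ℝ}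
    (hw : ∀ i, ∃ k : ℤ, w i = ε + k) :
    ∀ᶠ J in Filter.atTop, ∀ i, ∃ j < J, w i = ε + zigzag ε j :=
  Filter.eventually_all.mpr fun i => by
    obtain ⟨k, hk⟩ := hw i
    exact (Filter.eventually_gt_atTop ((zigzag ε).symm k)).mono fun J hJ => ⟨_, hJ, by simpa⟩

theorem IsPEps.eq_of_isVEps {n J : ℕ} {ε : ℝ} {w : Fin n → ℝ} {p q : ℕ → ℕ}
    (hq : IsPEps n ε w q) (hp : IsPartition n p) (hV : IsVEps n ε p w) (hnJ : n ≤ J)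
    (hw : ∀ i, ∃ j < J, w i = ε + zigzag ε j) : q = p :=
  eq_of_antitone_of_card_filter_lt_eq hq.1.1 hp.1 (fun j hj => hq.1.2.1 j (hnJ.trans hj))
    (fun j hj => hp.2.1 j (hnJ.trans hj))
    (card_filter_lt_eq_of_card_filter_eq fun c hc => by
      rw [hq.card_filter_eq hnJ (zigzag ε).injective hw hc]
      simp only [hV.multR_zigzag])

theorem statement3_general (n : ℕ) (ε : ℝ)
    (hε₁ : -(1 / 2 : ℝ) < ε) (hε₂ : ε < 1 / 2)
    (v v' : Fin n → ℝ)
    (hvmem : ∀ i, ∃ k : ℤ, v i = ε + (k : ℝ))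
    (hvmem' : ∀ i, ∃ k : ℤ, v' i = ε + (k : ℝ))
    (htri : ∃ p : ℕ → ℕ, IsPartition n p ∧ IsVEps n ε p v)
    (hlt : enormR v' < enormR v)
    (q q' : ℕ → ℕ) (hq : IsPEps n ε v q) (hq' : IsPEps n ε v' q') :
    ¬ Dominates q q' := by
  intro hdom
  obtain ⟨p, hp, hV⟩ := htri
  obtain ⟨J, hnJ, hvJ, hv'J⟩ := ((Filter.eventually_ge_atTop n).and
    ((eventually_forall_exists_lt_zigzag hvmem).and
      (eventually_forall_exists_lt_zigzag hvmem'))).exists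
  set x : ℕ → ℝ := fun j => ε + zigzag ε j
  have hx : Function.Injective x := fun a b h =>
    (zigzag ε).injective (by exact_mod_cast add_left_cancel h)
  have hqv : ∀ j, (q j : ℝ) = multR v (x j) := fun j => by
    rw [hq.eq_of_isVEps hp hV hnJ hvJ, hV.multR_zigzag]
  have hle : ∀ m ≤ J, ∑ j ∈ range m, (multR v' (x j) : ℝ) ≤ ∑ j ∈ range m, (q j : ℝ) :=
    fun m hm => by
      exact_mod_cast (hq'.sum_range_multR_le hnJ (zigzag ε).injective hv'J hm).trans (hdom m)
  have htot : ∑ j ∈ range J, (multR v' (x j) : ℝ) = ∑ j ∈ range J, (q j : ℝ) := by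
    simpa [hqv] using (sum_comp_eq_sum_range_multR hx hv'J 1).symm.trans
      (sum_comp_eq_sum_range_multR hx hvJ 1)
  have hsq : ∑ i, v i ^ 2 ≤ ∑ i, v' i ^ 2 := by
    rw [sum_comp_eq_sum_range_multR hx hvJ (· ^ 2), sum_comp_eq_sum_range_multR hx hv'J (· ^ 2)]
    simp only [← hqv]
    exact sum_range_mul_le_of_sum_range_le
      (monotone_sq_add_zigzag (abs_le.mpr ⟨hε₁.le, hε₂.le⟩)) hle htot
  exact hlt.not_ge (Real.sqrt_le_sqrt hsq)

/-- Let `ε ∈ (−1/2, 1/2)` and `v, v′ ∈ (ε+ℤ)ⁿ₊`.  If `v` is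
`ε`-triangular (i.e. `v = v_ε(p)` for some partition `p` of `n`) and `|v′| < |v|`, then
`p_ε(v′) ≰ p_ε(v)` in the dominance order. -/
theorem statement3 (n : ℕ) (hn : 1 ≤ n) (ε : ℝ)
    (hε₁ : -(1 / 2 : ℝ) < ε) (hε₂ : ε < 1 / 2)
    (v v' : Fin n → ℝ)
    (hv : Antitone v) (hvmem : ∀ i, ∃ k : ℤ, v i = ε + (k : ℝ))
    (hv' : Antitone v') (hvmem' : ∀ i, ∃ k : ℤ, v' i = ε + (k : ℝ))
    (htri : ∃ p : ℕ → ℕ, IsPartition n p ∧ IsVEps n ε p v)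
    (hlt : enormR v' < enormR v)
    (q q' : ℕ → ℕ) (hq : IsPEps n ε v q) (hq' : IsPEps n ε v' q') :
    ¬ Dominates q q' :=
  statement3_general n ε hε₁ hε₂ v v' hvmem hvmem' htri hlt q q' hq hq'
end

section
/- Let v, v′ ∈ (1/4+(1/2)ℤ≥0)ⁿ₊. If v is (1/4)ℤ-triangular and |v′| < |v|, then it is not the case that p_{1/4}(v′) ≤ p_{1/4}(v) in the dominance order. -/
open Finset

/-- `IsVQuarter n p w` says that the weakly decreasing tuple `w : Fin n → ℝ` is the tuple
having `ν_k = p (k-1)` entries equal to `(2k-1)/4` for each `k ≥ 1`, where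
`p = [ν₁, ν₂, …]` is a partition of `n`. -/
def IsVQuarter (n : ℕ) (p : ℕ → ℕ) (w : Fin n → ℝ) : Prop :=
  Antitone w ∧ (∀ i, ∃ k : ℕ, 1 ≤ k ∧ w i = (2 * (k : ℝ) - 1) / 4) ∧
  ∀ k : ℕ, 1 ≤ k → multR w ((2 * (k : ℝ) - 1) / 4) = p (k - 1)

/-- `IsPQuarter n v q` says that the partition `q` of `n` is the weakly decreasing
rearrangement of the multiplicity sequence `[m_v(1/4), m_v(3/4), m_v(5/4), …]`. -/
def IsPQuarter (n : ℕ) (v : Fin n → ℝ) (q : ℕ → ℕ) : Prop :=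
  IsPartition n q ∧
  ∀ c : ℕ, 1 ≤ c →
    mult n q c = {k : ℕ | 1 ≤ k ∧ multR v ((2 * (k : ℝ) - 1) / 4) = c}.ncard

/-! Write the entries of `v` and `v'` as levels `(2k+1)/4`, with multiplicity sequences `m` and
`m'`. Since `v` is triangular, `m` is already the partition `p_{1/4}(v)`, while the partial sums
of `m'` are bounded by those of its decreasing rearrangement `p_{1/4}(v')`. So
`p_{1/4}(v') ≤ p_{1/4}(v)` would give `m'_0 + ⋯ + m'_{t-1} ≤ m_0 + ⋯ + m_{t-1}` for every `t`:
below each level `v'` has at most as many entries as `v`. As the squared levels increase, Abel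
summation then gives `|v| ≤ |v'|`. -/

-- For a partition `r`, the sequence `c ↦ levelCount r (c + 1)` is its conjugate partition.
noncomputable def levelCount (r : ℕ → ℕ) (c : ℕ) : ℕ :=
  {k | c ≤ r k}.ncard

section Rearrangement

variable {r : ℕ → ℕ} {N B : ℕ}

lemma setOf_eq_coe_filter_range (hN : ∀ k, N ≤ k → r k = 0) {P : ℕ → Prop} [DecidablePred P]
    (hP : ∀ k, P k → r k ≠ 0) : {k | P k} = ↑((range N).filter P) := by
  ext k
  simp only [Set.mem_ofPred_eq, coe_filter, mem_range]
  exact ⟨fun hk => ⟨not_le.1 fun hNk => hP k hk (hN k hNk), hk⟩, And.right⟩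

lemma sum_eq_sum_card_filter_le (S : Finset ℕ) (hB : ∀ k ∈ S, r k ≤ B) :
    ∑ k ∈ S, r k = ∑ c ∈ Icc 1 B, #{k ∈ S | c ≤ r k} := by
  have hlayer : ∀ k ∈ S, r k = ∑ c ∈ Icc 1 B, if c ≤ r k then 1 else 0 := by
    intro k hk
    have hfilter : {c ∈ Icc 1 B | c ≤ r k} = Icc 1 (r k) := by
      ext c
      simp only [mem_filter, mem_Icc]
      have := hB k hk
      omega
    simp [hfilter]
  rw [sum_congr rfl hlayer, sum_comm]
  simp

lemma sum_le_sum_min_levelCount (hN : ∀ k, N ≤ k → r k = 0) (hB : ∀ k, r k ≤ B)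
    (S : Finset ℕ) : ∑ k ∈ S, r k ≤ ∑ c ∈ Icc 1 B, min #S (levelCount r c) := by
  rw [sum_eq_sum_card_filter_le S fun k _ => hB k]
  refine sum_le_sum fun c hc => le_min (card_filter_le _ _) ?_
  have hc : 1 ≤ c := (mem_Icc.1 hc).1
  rw [levelCount, setOf_eq_coe_filter_range hN fun k hk => by omega, Set.ncard_coe_finset]
  refine card_le_card fun k hk => ?_
  simp only [mem_filter, mem_range] at hk ⊢
  exact ⟨not_le.1 fun hNk => by have := hN k hNk; omega, hk.2⟩

lemma setOf_le_eq_Iio (hr : Antitone r) (hN : ∀ k, N ≤ k → r k = 0) {c : ℕ} (hc : 1 ≤ c) :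
    ∃ m, {k | c ≤ r k} = Set.Iio m := by
  classical
  have hex : ∃ m, r m < c := ⟨N, by rw [hN N le_rfl]; exact hc⟩
  refine ⟨Nat.find hex, Set.ext fun k => ?_⟩
  simp only [Set.mem_ofPred_eq, Set.mem_Iio]
  constructor
  · intro hk
    by_contra! hmk
    exact (Nat.find_spec hex).not_ge (hk.trans (hr hmk))
  · intro hk
    exact not_lt.1 (Nat.find_min hex hk)

lemma sum_range_eq_sum_min_levelCount (hr : Antitone r) (hN : ∀ k, N ≤ k → r k = 0)
    (hB : ∀ k, r k ≤ B) (t : ℕ) :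
    ∑ k ∈ range t, r k = ∑ c ∈ Icc 1 B, min t (levelCount r c) := by
  rw [sum_eq_sum_card_filter_le _ fun k _ => hB k]
  refine sum_congr rfl fun c hc => ?_
  obtain ⟨m, hm⟩ := setOf_le_eq_Iio hr hN (mem_Icc.1 hc).1
  have hfilter : {k ∈ range t | c ≤ r k} = range (min t m) := by
    ext k
    have := Set.ext_iff.1 hm k
    simp only [Set.mem_ofPred_eq, Set.mem_Iio] at this
    simp [this]
  rw [levelCount, hm, Set.ncard_Iio_nat, hfilter, card_range]

lemma levelCount_eq_sum_ncard (hN : ∀ k, N ≤ k → r k = 0) (hB : ∀ k, r k ≤ B) {c : ℕ}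
    (hc : 1 ≤ c) : levelCount r c = ∑ c' ∈ Icc c B, {k | r k = c'}.ncard := by
  classical
  rw [levelCount, setOf_eq_coe_filter_range hN fun k hk => by omega, Set.ncard_coe_finset,
    card_eq_sum_card_fiberwise (f := r) (t := Icc c B) fun k hk => ?_]
  · refine sum_congr rfl fun c' hc' => ?_
    rw [setOf_eq_coe_filter_range hN fun k hk => by have := (mem_Icc.1 hc').1; omega,
      Set.ncard_coe_finset, filter_filter]
    congr 1
    refine filter_congr fun k _ => ?_
    constructor
    · exact And.right
    · intro h; exact ⟨h ▸ (mem_Icc.1 hc').1, h⟩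
  · simp only [coe_filter, Set.mem_ofPred_eq, coe_Icc, Set.mem_Icc] at hk ⊢
    exact ⟨hk.2, hB k⟩

-- `hr'` and `hmult` say that `r'` is the decreasing rearrangement of `r`.
theorem sum_range_le_sum_range_of_antitone {r' : ℕ → ℕ} {N' : ℕ} (hr' : Antitone r')
    (hN : ∀ k, N ≤ k → r k = 0) (hN' : ∀ k, N' ≤ k → r' k = 0)
    (hB : ∀ k, r k ≤ B) (hB' : ∀ k, r' k ≤ B)
    (hmult : ∀ c, 1 ≤ c → {k | r k = c}.ncard = {k | r' k = c}.ncard) (t : ℕ) :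
    ∑ k ∈ range t, r k ≤ ∑ k ∈ range t, r' k := by
  calc ∑ k ∈ range t, r k ≤ ∑ c ∈ Icc 1 B, min #(range t) (levelCount r c) :=
        sum_le_sum_min_levelCount hN hB _
    _ = ∑ c ∈ Icc 1 B, min t (levelCount r' c) := by
        refine sum_congr rfl fun c hc => ?_
        have hc := (mem_Icc.1 hc).1
        rw [card_range, levelCount_eq_sum_ncard hN hB hc, levelCount_eq_sum_ncard hN' hB' hc]
        exact congrArg _ (sum_congr rfl fun c' hc' => hmult c' (hc.trans (mem_Icc.1 hc').1))
    _ = ∑ k ∈ range t, r' k := (sum_range_eq_sum_min_levelCount hr' hN' hB' t).symm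

end Rearrangement

section StochasticDominance

variable {ι M : Type*} [Fintype ι] [AddCommGroup M]

lemma sum_comp_eq_card_nsmul_sub_sum (f : ℕ → M) {κ : ι → ℕ} {K : ℕ} (hK : ∀ i, κ i ≤ K) :
    ∑ i, f (κ i) =
      Fintype.card ι • f K - ∑ j ∈ range K, #{i | κ i < j + 1} • (f (j + 1) - f j) := by
  have habel : ∀ k ≤ K, f k = f K - ∑ j ∈ range K, if k < j + 1 then f (j + 1) - f j else 0 := by
    intro k hk
    have hfilter : {j ∈ range K | k < j + 1} = Ico k K := by
      ext j
      simp only [mem_filter, mem_range, mem_Ico]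
      omega
    rw [← sum_filter, hfilter, sum_Ico_sub f hk, sub_sub_cancel]
  simp only [sum_congr rfl fun i _ => habel (κ i) (hK i), sum_sub_distrib, sum_const, card_univ]
  rw [sum_comm]
  simp only [← sum_filter, sum_const]

theorem sum_comp_le_sum_comp_of_card_lt_le [PartialOrder M] [IsOrderedAddMonoid M] {f : ℕ → M}
    (hf : Monotone f) {κ κ' : ι → ℕ} (h : ∀ j, #{i | κ' i < j} ≤ #{i | κ i < j}) :
    ∑ i, f (κ i) ≤ ∑ i, f (κ' i) := by
  rw [sum_comp_eq_card_nsmul_sub_sum f (K := univ.sup κ ⊔ univ.sup κ')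
      fun i => (le_sup (mem_univ i)).trans le_sup_left,
    sum_comp_eq_card_nsmul_sub_sum f fun i => (le_sup (mem_univ i)).trans le_sup_right]
  exact sub_le_sub_left (sum_le_sum fun j _ =>
    nsmul_le_nsmul_left (sub_nonneg.2 (hf j.le_succ)) (h (j + 1))) _

end StochasticDominance

lemma IsPartition.le {N : ℕ} {p : ℕ → ℕ} (hp : IsPartition N p) (k : ℕ) : p k ≤ N := by
  rcases lt_or_ge k N with hk | hk
  · exact hp.2.2 ▸ single_le_sum (fun i _ => Nat.zero_le (p i)) (mem_range.2 hk)
  · exact (hp.2.1 k hk).symm ▸ Nat.zero_le N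

lemma IsPartition.mult_eq_ncard {N : ℕ} {p : ℕ → ℕ} (hp : IsPartition N p) {c : ℕ}
    (hc : 1 ≤ c) : mult N p c = {k | p k = c}.ncard := by
  rw [mult, setOf_eq_coe_filter_range hp.2.1 fun k hk => by omega, Set.ncard_coe_finset]

-- Levels are indexed from `0` here (`level 0 = 1/4`), but from `1` in `IsVQuarter`, `IsPQuarter`.
noncomputable def level (k : ℕ) : ℝ :=
  (2 * k + 1) / 4

lemma level_injective : Function.Injective level := by
  intro j k h
  simp only [level] at h
  exact_mod_cast (by linarith : (j : ℝ) = k)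

lemma monotone_level_sq : Monotone fun k => level k ^ 2 := by
  intro j k hjk
  have : (j : ℝ) ≤ k := by exact_mod_cast hjk
  simp only [level]
  gcongr

lemma level_eq_of_succ (k : ℕ) : (2 * ((k + 1 : ℕ) : ℝ) - 1) / 4 = level k := by
  simp only [level]
  push_cast
  ring

lemma exists_eq_level {x : ℝ} (h : ∃ k : ℕ, 1 ≤ k ∧ x = (2 * (k : ℝ) - 1) / 4) :
    ∃ k, x = level k := by
  obtain ⟨k, hk, rfl⟩ := h
  obtain ⟨k, rfl⟩ := Nat.exists_eq_add_of_le' hk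
  exact ⟨k, level_eq_of_succ k⟩

lemma multR_level_comp {n : ℕ} (κ : Fin n → ℕ) (k : ℕ) :
    multR (level ∘ κ) (level k) = #{i | κ i = k} := by
  rw [multR, ← Set.ncard_coe_finset]
  simp [level_injective.eq_iff]

lemma ncard_setOf_multR_eq {n : ℕ} (v : Fin n → ℝ) (c : ℕ) :
    {k : ℕ | 1 ≤ k ∧ multR v ((2 * (k : ℝ) - 1) / 4) = c}.ncard =
      {k | multR v (level k) = c}.ncard := by
  rw [← Set.ncard_image_of_injective {k | multR v (level k) = c} Nat.succ_injective]
  congr 1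
  ext k
  constructor
  · rintro ⟨hk, hmult⟩
    obtain ⟨k, rfl⟩ := Nat.exists_eq_add_of_le' hk
    exact ⟨k, by rwa [level_eq_of_succ] at hmult, rfl⟩
  · rintro ⟨k, hmult, rfl⟩
    exact ⟨k.succ_pos, by rwa [Nat.succ_eq_add_one, level_eq_of_succ]⟩

lemma card_lt_eq_sum_range {ι : Type*} [Fintype ι] (κ : ι → ℕ) (t : ℕ) :
    #{i | κ i < t} = ∑ k ∈ range t, #{i | κ i = k} := by
  classical
  rw [card_eq_sum_card_fiberwise (f := κ) (t := range t) fun i hi => by simpa using hi]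
  simp only [filter_filter]
  refine sum_congr rfl fun k hk => congrArg _ (filter_congr fun i _ => ?_)
  have := mem_range.1 hk
  constructor
  · exact And.right
  · intro h; exact ⟨h ▸ this, h⟩

lemma IsPQuarter.ncard_eq {n : ℕ} {κ : Fin n → ℕ} {q : ℕ → ℕ} (hq : IsPQuarter n (level ∘ κ) q)
    {c : ℕ} (hc : 1 ≤ c) : {k | #{i | κ i = k} = c}.ncard = {k | q k = c}.ncard := by
  rw [← hq.1.mult_eq_ncard hc, hq.2 c hc, ncard_setOf_multR_eq]
  simp only [multR_level_comp]

lemma IsPQuarter.sum_range_card_le {n : ℕ} {κ : Fin n → ℕ} {q : ℕ → ℕ}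
    (hq : IsPQuarter n (level ∘ κ) q) (t : ℕ) :
    ∑ k ∈ range t, #{i | κ i = k} ≤ ∑ k ∈ range t, q k := by
  refine sum_range_le_sum_range_of_antitone hq.1.1 (N := univ.sup κ + 1) (fun k hk => ?_)
    hq.1.2.1 (fun k => (card_filter_le _ _).trans_eq (card_fin n)) hq.1.le
    (fun c hc => hq.ncard_eq hc) t
  refine card_eq_zero.2 (filter_eq_empty_iff.2 fun i _ hi => ?_)
  have := le_sup (f := κ) (mem_univ i)
  omega

theorem statement9_general (n : ℕ)
    (v v' : Fin n → ℝ)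
    (hvmem : ∀ i, ∃ k : ℕ, 1 ≤ k ∧ v i = (2 * (k : ℝ) - 1) / 4)
    (hvmem' : ∀ i, ∃ k : ℕ, 1 ≤ k ∧ v' i = (2 * (k : ℝ) - 1) / 4)
    (htri : ∃ p : ℕ → ℕ, IsPartition n p ∧ IsVQuarter n p v)
    (hlt : enormR v' < enormR v)
    (q q' : ℕ → ℕ) (hq : IsPQuarter n v q) (hq' : IsPQuarter n v' q') :
    ¬ Dominates q q' := by
  intro hdom
  obtain ⟨p, hp, -, -, hvp⟩ := htri
  choose κ hκ using fun i => exists_eq_level (hvmem i)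
  choose κ' hκ' using fun i => exists_eq_level (hvmem' i)
  obtain rfl : v = level ∘ κ := funext hκ
  obtain rfl : v' = level ∘ κ' := funext hκ'
  have hκp : ∀ k, #{i | κ i = k} = p k := fun k => by
    rw [← multR_level_comp, ← level_eq_of_succ, hvp (k + 1) k.succ_pos, Nat.add_sub_cancel]
  have hκ'κ : ∀ t, #{i | κ' i < t} ≤ #{i | κ i < t} := by
    intro t
    rw [card_lt_eq_sum_range, card_lt_eq_sum_range]
    calc ∑ k ∈ range t, #{i | κ' i = k} ≤ ∑ k ∈ range t, q' k := hq'.sum_range_card_le t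
      _ ≤ ∑ k ∈ range t, q k := hdom t
      _ ≤ ∑ k ∈ range t, p k := sum_range_le_sum_range_of_antitone hp.1 hq.1.2.1 hp.2.1 hq.1.le
        hp.le (fun c hc => by simpa only [hκp] using (hq.ncard_eq hc).symm) t
      _ = ∑ k ∈ range t, #{i | κ i = k} := by simp only [hκp]
  have hnormsq : ∑ i, level (κ i) ^ 2 ≤ ∑ i, level (κ' i) ^ 2 :=
    sum_comp_le_sum_comp_of_card_lt_le monotone_level_sq hκ'κ
  exact hlt.not_ge (Real.sqrt_le_sqrt hnormsq)

/-- Let `v, v′` be weakly decreasing `n`-tuples with all entries of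
the form `(2k-1)/4` for `k ≥ 1`.  If `v` is `(1/4)ℤ`-triangular (i.e. it lies in
the image of `v_{1/4}`) and `|v′| < |v|`, then `p_{1/4}(v′) ≰ p_{1/4}(v)`
in the dominance order. -/
theorem statement9 (n : ℕ) (hn : 1 ≤ n)
    (v v' : Fin n → ℝ) (hv : Antitone v) (hv' : Antitone v')
    (hvmem : ∀ i, ∃ k : ℕ, 1 ≤ k ∧ v i = (2 * (k : ℝ) - 1) / 4)
    (hvmem' : ∀ i, ∃ k : ℕ, 1 ≤ k ∧ v' i = (2 * (k : ℝ) - 1) / 4)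
    (htri : ∃ p : ℕ → ℕ, IsPartition n p ∧ IsVQuarter n p v)
    (hlt : enormR v' < enormR v)
    (q q' : ℕ → ℕ) (hq : IsPQuarter n v q) (hq' : IsPQuarter n v' q') :
    ¬ Dominates q q' :=
  statement9_general n v v' hvmem hvmem' htri hlt q q' hq hq'
end
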